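/- Under the hypotheses of the split conformal coverage theorem, if additionally the conformity scores E₁, …, E_{n+1} are almost surely distinct, then P(Y_{n+1} ∈ C(X_{n+1})) ≤ 1 − α + 1/(n+1). -/

import Mathlib

open MeasureTheory Set ENNReal

/-- The k-th smallest value of a tuple of reals (as an extended real),
taken to be +∞ if k exceeds the length (or k = 0). -/
noncomputable def kthSmallest {n : ℕ} (v : Fin n → ℝ) (k : ℕ) : EReal :=
  if h : 0 < k ∧ k ≤ n then ((v (Tuple.sort v ⟨k - 1, by omega⟩)) : EReal) else ⊤


lemma card_filter_perm {ι : Type*} [Fintype ι] [DecidableEq ι] (π : Equiv.Perm ι)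
    (p : ι → Prop) [DecidablePred p] :
    (Finset.univ.filter fun i => p (π i)).card = (Finset.univ.filter p).card := by
  rw [show (Finset.univ.filter fun i => p (π i)) =
      (Finset.univ.filter p).map π.symm.toEmbedding by
    ext j
    simp only [Finset.mem_map, Finset.mem_filter, Finset.mem_univ, true_and,
      Equiv.coe_toEmbedding]
    constructor
    · rintro hp; exact ⟨π j, hp, π.symm_apply_apply j⟩
    · rintro ⟨i, hi, rfl⟩; simpa using hi]
  exact Finset.card_map _

lemma monotone_rank_iff {m : ℕ} {u : Fin m → ℝ} (hu : Monotone u) (x : ℝ) (j : Fin m) :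
    x ≤ u j ↔ (Finset.univ.filter fun i => u i < x).card ≤ (j : ℕ) := by
  constructor
  · intro h
    calc (Finset.univ.filter fun i => u i < x).card
        ≤ (Finset.range (j : ℕ)).card := by
          refine Finset.card_le_card_of_injOn (fun i => (i : ℕ)) ?_ ?_
          · intro i hi
            simp only [Finset.mem_coe, Finset.mem_filter, Finset.mem_univ, true_and] at hi
            simp only [Finset.mem_coe, Finset.mem_range]
            by_contra hc
            have : (j : Fin m) ≤ i := by
              rw [Fin.le_def]; omega
            exact absurd (lt_of_le_of_lt (h.trans (hu this)) hi) (lt_irrefl _)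
          · exact fun a _ b _ hab => Fin.val_injective hab
      _ = (j : ℕ) := Finset.card_range _
  · intro h
    by_contra hc
    push_neg at hc
    have hsub : (Finset.range ((j : ℕ) + 1)).card ≤
        (Finset.univ.filter fun i => u i < x).card := by
      refine Finset.card_le_card_of_injOn (fun a => (⟨a % m, Nat.mod_lt _ j.pos⟩ : Fin m)) ?_ ?_
      · intro a ha
        simp only [Finset.mem_coe, Finset.mem_range] at ha
        have ham : a % m = a := Nat.mod_eq_of_lt (by omega)
        simp only [Finset.mem_coe, Finset.mem_filter, Finset.mem_univ, true_and]
        have : (⟨a % m, Nat.mod_lt _ j.pos⟩ : Fin m) ≤ j := by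
          rw [Fin.le_def]
          show a % m ≤ (j : ℕ)
          omega
        exact lt_of_le_of_lt (hu this) hc
      · intro a ha b hb hab
        simp only [Finset.mem_coe, Finset.mem_range] at ha hb
        have : a % m = b % m := congrArg Fin.val hab
        rwa [Nat.mod_eq_of_lt (by omega), Nat.mod_eq_of_lt (by omega)] at this
    rw [Finset.card_range] at hsub
    omega

/-- Split conformal prediction, upper bound: under the hypotheses of the coverage
theorem, if the conformity scores E₁,…,E_{n+1} are almost surely distinct, then
P(Y_{n+1} ∈ C(X_{n+1})) ≤ 1 − α + 1/(n+1). -/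
theorem split_conformal_coverage_upper
    {Ω 𝒳 𝒴 : Type*} [MeasurableSpace Ω] [MeasurableSpace 𝒳] [MeasurableSpace 𝒴]
    (P : Measure Ω) [IsProbabilityMeasure P]
    (n : ℕ) (X : Fin (n + 1) → Ω → 𝒳) (Y : Fin (n + 1) → Ω → 𝒴)
    (hX : ∀ i, Measurable (X i)) (hY : ∀ i, Measurable (Y i))
    (s : 𝒳 → 𝒴 → ℝ) (hs : Measurable (Function.uncurry s))
    (α : ℝ) (hα : α ∈ Ioo (0 : ℝ) 1)
    (hexch : ∀ π : Equiv.Perm (Fin (n + 1)),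
      P.map (fun ω i => (X (π i) ω, Y (π i) ω)) = P.map (fun ω i => (X i ω, Y i ω)))
    (hdistinct : ∀ i j : Fin (n + 1), i ≠ j →
      P {ω | s (X i ω) (Y i ω) = s (X j ω) (Y j ω)} = 0) :
    P {ω | Y (Fin.last n) ω ∈
        {y : 𝒴 | (s (X (Fin.last n) ω) y : EReal) ≤
          kthSmallest (fun i : Fin n => s (X i.castSucc ω) (Y i.castSucc ω))
            ⌈(1 - α) * (n + 1 : ℝ)⌉₊}}
      ≤ ENNReal.ofReal (1 - α) + ((n : ℝ≥0∞) + 1)⁻¹ := by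
  classical
  obtain ⟨hα0, hα1⟩ := hα
  set k : ℕ := ⌈(1 - α) * (n + 1 : ℝ)⌉₊ with hkdef
  have hn1 : (0:ℝ) < (n:ℝ) + 1 := by positivity
  have hx0 : (0:ℝ) < (1 - α) * ((n:ℝ) + 1) := by nlinarith
  have hk1 : 1 ≤ k := by rw [hkdef]; exact Nat.ceil_pos.mpr hx0
  have hkx : (k:ℝ) < (1 - α) * ((n:ℝ) + 1) + 1 := by
    rw [hkdef]; exact Nat.ceil_lt_add_one hx0.le
  have hRHS : ENNReal.ofReal (1 - α) + ((n : ℝ≥0∞) + 1)⁻¹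
      = ENNReal.ofReal (1 - α + ((n:ℝ)+1)⁻¹) := by
    rw [ENNReal.ofReal_add (by linarith) (by positivity)]
    congr 1
    have h1 : ((n:ℝ≥0∞)+1) = ENNReal.ofReal ((n:ℝ)+1) := by
      rw [ENNReal.ofReal_add (by positivity) zero_le_one, ENNReal.ofReal_natCast,
        ENNReal.ofReal_one]
    rw [h1, ← ENNReal.ofReal_inv_of_pos hn1]
  by_cases hkn : k ≤ n
  · -- main case
    set T : Ω → (Fin (n+1) → 𝒳 × 𝒴) := fun ω i => (X i ω, Y i ω) with hTdef
    have hTm : Measurable T := measurable_pi_lambda _ fun i => ((hX i).prodMk (hY i))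
    set μ : Measure (Fin (n+1) → 𝒳 × 𝒴) := P.map T with hμ
    have hprob : IsProbabilityMeasure μ := Measure.isProbabilityMeasure_map hTm.aemeasurable
    set e : (Fin (n+1) → 𝒳 × 𝒴) → Fin (n+1) → ℝ := fun v i => s (v i).1 (v i).2 with he
    have hem : ∀ i, Measurable fun v => e v i := fun i => hs.comp (measurable_pi_apply i)
    set rk : (Fin (n+1) → 𝒳 × 𝒴) → Fin (n+1) → ℕ :=
      fun v j => (Finset.univ.filter fun i => e v i ≤ e v j).card with hrk
    set B : Fin (n+1) → Set (Fin (n+1) → 𝒳 × 𝒴) := fun j => {v | rk v j ≤ k} with hB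
    have hBm : ∀ j, MeasurableSet (B j) := by
      intro j
      have h1 : Measurable fun v => rk v j := by
        have h2 : (fun v => rk v j) = fun v => ∑ i, if e v i ≤ e v j then 1 else 0 := by
          funext v; exact Finset.card_filter _ _
        rw [h2]
        exact Finset.measurable_sum _ fun i _ =>
          Measurable.ite (measurableSet_le (hem i) (hem j)) measurable_const measurable_const
      exact h1 measurableSet_Iic
    set Nb : Set (Fin (n+1) → 𝒳 × 𝒴) :=
      ⋃ (i) (j) (_ : i ≠ j), {v | e v i = e v j} with hNbdef
    have hNbm : MeasurableSet Nb :=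
      MeasurableSet.iUnion fun i => MeasurableSet.iUnion fun j => MeasurableSet.iUnion
        fun _ => measurableSet_eq_fun (hem i) (hem j)
    have hNb0 : μ Nb = 0 := by
      refine measure_iUnion_null fun i => measure_iUnion_null fun j =>
        measure_iUnion_null fun hij => ?_
      rw [hμ, Measure.map_apply hTm (measurableSet_eq_fun (hem i) (hem j))]
      exact hdistinct i j hij
    have hinj : ∀ v, v ∉ Nb → Function.Injective (e v) := by
      intro v hv a b hab
      by_contra hne
      exact hv (Set.mem_iUnion.mpr ⟨a, Set.mem_iUnion.mpr ⟨b, Set.mem_iUnion.mpr ⟨hne, hab⟩⟩⟩)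
    have hrklt : ∀ v (a b : Fin (n+1)), e v a < e v b → rk v a < rk v b := by
      intro v a b h
      have hsubset : (Finset.univ.filter fun i => e v i ≤ e v a)
          ⊆ (Finset.univ.filter fun i => e v i ≤ e v b) := by
        intro i hi
        simp only [Finset.mem_filter, Finset.mem_univ, true_and] at hi ⊢
        linarith
      apply Finset.card_lt_card
      rw [Finset.ssubset_iff_of_subset hsubset]
      refine ⟨b, ?_, ?_⟩
      · simp only [Finset.mem_filter, Finset.mem_univ, true_and]; exact le_rfl
      · simp only [Finset.mem_filter, Finset.mem_univ, true_and]
        exact not_le.mpr h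
    have hrkinj : ∀ v, Function.Injective (e v) → Function.Injective (rk v) := by
      intro v hv a b hab
      by_contra hne
      rcases lt_trichotomy (e v a) (e v b) with h|h|h
      · exact absurd hab (hrklt v a b h).ne
      · exact hne (hv h)
      · exact absurd hab.symm (hrklt v b a h).ne
    have hrkpos : ∀ v j, 1 ≤ rk v j := by
      intro v j
      refine Finset.card_pos.mpr ⟨j, ?_⟩
      simp only [Finset.mem_filter, Finset.mem_univ, true_and]; exact le_rfl
    have hcount : ∀ v, Function.Injective (e v) →
        (Finset.univ.filter fun j => rk v j ≤ k).card ≤ k := by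
      intro v hv
      calc (Finset.univ.filter fun j => rk v j ≤ k).card
          ≤ (Finset.Icc 1 k).card := by
            refine Finset.card_le_card_of_injOn (rk v) ?_ ?_
            · intro j hj
              simp only [Finset.mem_coe, Finset.mem_filter, Finset.mem_univ, true_and] at hj
              exact Finset.mem_Icc.mpr ⟨hrkpos v j, hj⟩
            · exact Function.Injective.injOn (hrkinj v hv)
        _ = k := by rw [Nat.card_Icc]; omega
    have hBswap : ∀ j, μ (B j) = μ (B (Fin.last n)) := by
      intro j
      set π := Equiv.swap j (Fin.last n) with hπ
      have hpm : Measurable fun v : Fin (n+1) → 𝒳 × 𝒴 => v ∘ π :=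
        measurable_pi_lambda _ fun i => measurable_pi_apply (π i)
      have hmap : μ.map (fun v => v ∘ π) = μ := by
        rw [hμ, Measure.map_map hpm hTm]
        exact hexch π
      have hpre : B j = (fun v => v ∘ π) ⁻¹' (B (Fin.last n)) := by
        ext v
        simp only [hB, Set.mem_preimage, Set.mem_setOf_eq]
        have h1 : rk (v ∘ π) (Fin.last n) = rk v j := by
          have h2 : rk (v ∘ π) (Fin.last n)
              = (Finset.univ.filter fun i => e v (π i) ≤ e v (π (Fin.last n))).card := rfl
          have h3 : π (Fin.last n) = j := Equiv.swap_apply_right _ _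
          rw [h2, h3, card_filter_perm π (fun i => e v i ≤ e v j)]
        rw [h1]
      rw [hpre, ← Measure.map_apply hpm (hBm (Fin.last n)), hmap]
    have hsum : ∑ j : Fin (n+1), μ (B j) ≤ (k : ℝ≥0∞) := by
      have h1 : ∑ j : Fin (n+1), μ (B j)
          = ∫⁻ v, ∑ j : Fin (n+1), (B j).indicator (fun _ => (1:ℝ≥0∞)) v ∂μ := by
        rw [lintegral_finset_sum _ fun j _ => (measurable_const.indicator (hBm j))]
        exact Finset.sum_congr rfl fun j _ => (lintegral_indicator_one (hBm j)).symm
      rw [h1]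
      have h2 : ∀ᵐ v ∂μ, ∑ j : Fin (n+1), (B j).indicator (fun _ => (1:ℝ≥0∞)) v
          ≤ (k:ℝ≥0∞) := by
        have hae : ∀ᵐ v ∂μ, v ∉ Nb := by
          rw [ae_iff]
          simpa using hNb0
        filter_upwards [hae] with v hv
        have hvi := hinj v hv
        have h3 : ∑ j : Fin (n+1), (B j).indicator (fun _ => (1:ℝ≥0∞)) v
            = ((Finset.univ.filter fun j => rk v j ≤ k).card : ℝ≥0∞) := by
          rw [Finset.card_filter]
          push_cast
          refine Finset.sum_congr rfl fun j _ => ?_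
          rw [Set.indicator_apply]
          simp only [hB, Set.mem_setOf_eq]
        rw [h3]
        exact_mod_cast hcount v hvi
      calc ∫⁻ v, ∑ j : Fin (n+1), (B j).indicator (fun _ => (1:ℝ≥0∞)) v ∂μ
          ≤ ∫⁻ _, (k:ℝ≥0∞) ∂μ := lintegral_mono_ae h2
        _ = (k:ℝ≥0∞) := by rw [lintegral_const, measure_univ, mul_one]
    have hμBlast : μ (B (Fin.last n)) ≤ (k : ℝ≥0∞) / ((n:ℝ≥0∞)+1) := by
      have h4 : ∑ j : Fin (n+1), μ (B j) = ((n:ℝ≥0∞)+1) * μ (B (Fin.last n)) := by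
        rw [Finset.sum_congr rfl fun j _ => hBswap j, Finset.sum_const, Finset.card_univ,
          Fintype.card_fin, nsmul_eq_mul]
        push_cast
        ring
      have h3 : ((n:ℝ≥0∞)+1) * μ (B (Fin.last n)) ≤ (k:ℝ≥0∞) := h4 ▸ hsum
      rw [ENNReal.le_div_iff_mul_le (Or.inl (by simp)) (Or.inl (by simp))]
      rw [mul_comm]
      exact h3
    have hsub : {ω | Y (Fin.last n) ω ∈
        {y : 𝒴 | (s (X (Fin.last n) ω) y : EReal) ≤
          kthSmallest (fun i : Fin n => s (X i.castSucc ω) (Y i.castSucc ω)) k}}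
        ⊆ T ⁻¹' (B (Fin.last n) ∪ Nb) := by
      intro ω hω
      simp only [Set.mem_setOf_eq] at hω
      by_cases hvN : T ω ∈ Nb
      · exact Or.inr hvN
      left
      have hvi : ∀ i : Fin n, s (X i.castSucc ω) (Y i.castSucc ω)
          ≠ s (X (Fin.last n) ω) (Y (Fin.last n) ω) := by
        intro i hcon
        exact hvN (Set.mem_iUnion.mpr ⟨i.castSucc, Set.mem_iUnion.mpr ⟨Fin.last n,
          Set.mem_iUnion.mpr ⟨(Fin.castSucc_lt_last i).ne, hcon⟩⟩⟩)
      set x : ℝ := s (X (Fin.last n) ω) (Y (Fin.last n) ω) with hx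
      set w : Fin n → ℝ := fun i => s (X i.castSucc ω) (Y i.castSucc ω) with hw
      unfold kthSmallest at hω
      rw [dif_pos ⟨hk1, hkn⟩] at hω
      rw [EReal.coe_le_coe_iff] at hω
      have h5 := (monotone_rank_iff (u := fun i => w (Tuple.sort w i))
        (Tuple.monotone_sort w) x ⟨k - 1, by omega⟩).mp hω
      rw [card_filter_perm (Tuple.sort w) (fun i => w i < x)] at h5
      have h5' : (Finset.univ.filter fun i : Fin n => w i < x).card ≤ k - 1 := h5
      show rk (T ω) (Fin.last n) ≤ k
      have h6 : rk (T ω) (Fin.last n)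
          = (Finset.univ.filter fun i : Fin n => w i < x).card + 1 := by
        show (Finset.univ.filter fun i : Fin (n+1) =>
          e (T ω) i ≤ e (T ω) (Fin.last n)).card = _
        rw [Finset.card_filter, Fin.sum_univ_castSucc, Finset.card_filter]
        rw [if_pos (le_refl (e (T ω) (Fin.last n)))]
        congr 1
        refine Finset.sum_congr rfl fun i _ => ?_
        by_cases hlt : w i < x
        · rw [if_pos hlt.le, if_pos hlt]
        · rw [if_neg (fun hle => hvi i (le_antisymm hle (not_lt.mp hlt))), if_neg hlt]
      omega
    calc P {ω | Y (Fin.last n) ω ∈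
        {y : 𝒴 | (s (X (Fin.last n) ω) y : EReal) ≤
          kthSmallest (fun i : Fin n => s (X i.castSucc ω) (Y i.castSucc ω)) k}}
        ≤ P (T ⁻¹' (B (Fin.last n) ∪ Nb)) := measure_mono hsub
      _ = μ (B (Fin.last n) ∪ Nb) := by
          rw [hμ, Measure.map_apply hTm ((hBm (Fin.last n)).union hNbm)]
      _ ≤ μ (B (Fin.last n)) + μ Nb := measure_union_le _ _
      _ = μ (B (Fin.last n)) := by rw [hNb0, add_zero]
      _ ≤ (k : ℝ≥0∞) / ((n:ℝ≥0∞)+1) := hμBlast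
      _ ≤ ENNReal.ofReal (1 - α) + ((n : ℝ≥0∞) + 1)⁻¹ := by
          rw [hRHS]
          have h7 : (k : ℝ≥0∞) / ((n:ℝ≥0∞)+1) = ENNReal.ofReal ((k:ℝ) / ((n:ℝ)+1)) := by
            rw [ENNReal.ofReal_div_of_pos hn1, ENNReal.ofReal_natCast]
            congr 1
            rw [ENNReal.ofReal_add (by positivity) zero_le_one, ENNReal.ofReal_natCast,
              ENNReal.ofReal_one]
          rw [h7]
          apply ENNReal.ofReal_le_ofReal
          rw [div_le_iff₀ hn1]
          have hinv : ((n:ℝ)+1)⁻¹ * ((n:ℝ)+1) = 1 := inv_mul_cancel₀ hn1.ne'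
          nlinarith [hkx]
  · -- trivial case: k ≥ n + 1, bound exceeds 1
    have hk' : (n:ℝ) + 1 ≤ (k:ℝ) := by
      have : n + 1 ≤ k := by omega
      exact_mod_cast this
    have hinv : ((n:ℝ)+1)⁻¹ * ((n:ℝ)+1) = 1 := inv_mul_cancel₀ hn1.ne'
    have h1 : (1:ℝ) ≤ 1 - α + ((n:ℝ)+1)⁻¹ := by nlinarith [hkx, hk']
    calc P {ω | Y (Fin.last n) ω ∈
        {y : 𝒴 | (s (X (Fin.last n) ω) y : EReal) ≤
          kthSmallest (fun i : Fin n => s (X i.castSucc ω) (Y i.castSucc ω)) k}}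
        ≤ 1 := prob_le_one
      _ ≤ ENNReal.ofReal (1 - α) + ((n : ℝ≥0∞) + 1)⁻¹ := by
          rw [hRHS, ← ENNReal.ofReal_one]
          exact ENNReal.ofReal_le_ofReal h1
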